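/- arXiv:2212.12209 — 3 statements merged into one kernel-verified Lean document; each statement's English description precedes it below -/
import Mathlib

section
/- Lemma 1 (macroscale decay of Shannon mutual information for Lancaster–Sarmanov random fields): Under Assumption I, suppose that for every r > 0 the kernel Q_{γ(r)} converges in L²(μ⊗μ) and 1 + Q_{γ(r)}(u,v) ≥ 0 for a.e. (u,v). Then the Shannon mutual information between two marginal components of the field at spatial distance r, namely S_ϱ(r) := ∫∫ p_{γ(r)}(u,v) · ln( p_{γ(r)}(u,v) / (p(u)p(v)) ) du dv, satisfies S_ϱ(r) = O(r^{-ϱ}) as r → ∞. -/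
/-! Write `Q = Q_t`, `φ(x) = (1 + x) log (1 + x)` and `S(t)` for the mutual information of `p_t`,
so that `S_ϱ(r) = S(γ(r))`. The integrand of `S(t)` is `p(u) p(v) φ(Q(u,v))` and
`|φ(x)| ≤ |x| + x²` for `x ≥ -1`, so by Fubini and Jensen `|S(t)| ≤ ‖Q‖₂ + ‖Q‖₂²` in
`L²(μ ⊗ μ)`. By orthonormality of the `e_k` the partial sums of `Q_t` have squared norm at most
`∑_{k ≥ 1} t^{2k} = t² / (1 - t²)`, and Fatou's lemma passes this bound to their a.e. limit.
Hence `|S(t)| ≤ 3|t|` for `|t| ≤ 1/2`, and `S_ϱ(r) = O(γ(r)) = O(r^{-ϱ})`. -/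

open MeasureTheory Real Filter Asymptotics

noncomputable section

/-- The measure `μ` on `ℝ` with density `p` with respect to Lebesgue measure. -/
def LSmeasure (p : ℝ → ℝ) : Measure ℝ :=
  volume.withDensity fun u => ENNReal.ofReal (p u)

/-- `p` is a measurable probability density on `ℝ`. -/
def IsProbDensity (p : ℝ → ℝ) : Prop :=
  Measurable p ∧ (∀ᵐ u : ℝ, 0 ≤ p u) ∧ (∫ u : ℝ, p u) = 1

/-- `(e k)` is a system of measurable functions, orthonormal in `L²(p(u) du)`,
with `e 0 ≡ 1`. -/
def OrthonormalSystem (p : ℝ → ℝ) (e : ℕ → ℝ → ℝ) : Prop :=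
  (∀ u, e 0 u = 1) ∧ (∀ k, Measurable (e k)) ∧
    ∀ k l, (∫ u : ℝ, e k u * e l u * p u) = if k = l then (1 : ℝ) else 0

/-- The Lancaster–Sarmanov kernel `Q_t(u,v) = ∑_{k ≥ 1} t^k e_k(u) e_k(v)`. -/
def LSker (e : ℕ → ℝ → ℝ) (t : ℝ) (u v : ℝ) : ℝ :=
  ∑' k : ℕ, t ^ (k + 1) * e (k + 1) u * e (k + 1) v

/-- The Lancaster–Sarmanov bivariate density
`p_t(u,v) = p(u) p(v) (1 + Q_t(u,v))`. -/
def LSdens (p : ℝ → ℝ) (e : ℕ → ℝ → ℝ) (t : ℝ) (u v : ℝ) : ℝ :=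
  p u * p v * (1 + LSker e t u v)

/-- The series defining the kernel `Q_t` converges in `L²(μ ⊗ μ)`: it is
a.e. (pointwise) summable and its partial sums converge to `Q_t` in
`L²((μ ⊗ μ))`-norm. -/
def KerConvergesInL2 (p : ℝ → ℝ) (e : ℕ → ℝ → ℝ) (t : ℝ) : Prop :=
  (∀ᵐ w : ℝ × ℝ ∂((LSmeasure p).prod (LSmeasure p)),
      Summable fun k : ℕ => t ^ (k + 1) * e (k + 1) w.1 * e (k + 1) w.2) ∧
    Tendsto
      (fun n : ℕ =>
        ∫ w : ℝ × ℝ,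
          (LSker e t w.1 w.2 -
              ∑ k ∈ Finset.range n, t ^ (k + 1) * e (k + 1) w.1 * e (k + 1) w.2) ^ 2
            ∂((LSmeasure p).prod (LSmeasure p)))
      atTop (nhds 0)

def LSmutualInfo (p : ℝ → ℝ) (e : ℕ → ℝ → ℝ) (t : ℝ) : ℝ :=
  ∫ u : ℝ, ∫ v : ℝ, LSdens p e t u v * Real.log (LSdens p e t u v / (p u * p v))

open scoped ENNReal Topology

instance (p : ℝ → ℝ) : SFinite (LSmeasure p) := by
  unfold LSmeasure; infer_instance

section Density

variable {p : ℝ → ℝ}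

lemma IsProbDensity.integrable (hp : IsProbDensity p) : Integrable p := by
  by_contra h
  simpa [integral_undef h] using hp.2.2

lemma IsProbDensity.isProbabilityMeasure (hp : IsProbDensity p) :
    IsProbabilityMeasure (LSmeasure p) := by
  constructor
  rw [LSmeasure, withDensity_apply _ MeasurableSet.univ, Measure.restrict_univ,
    ← ofReal_integral_eq_lintegral_ofReal hp.integrable hp.2.1, hp.2.2, ENNReal.ofReal_one]

lemma integral_LSmeasure (hpm : Measurable p) (hp0 : 0 ≤ᵐ[volume] p) (h : ℝ → ℝ) :
    ∫ u, h u ∂LSmeasure p = ∫ u, p u * h u := by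
  change ∫ u, h u ∂volume.withDensity (fun u => ((p u).toNNReal : ℝ≥0∞)) = _
  rw [integral_withDensity_eq_integral_smul hpm.real_toNNReal]
  refine integral_congr_ae ?_
  filter_upwards [hp0] with u hu
  simp [NNReal.smul_def, Real.coe_toNNReal _ hu]

lemma integrable_LSmeasure_iff (hpm : Measurable p) (hp0 : 0 ≤ᵐ[volume] p) (h : ℝ → ℝ) :
    Integrable h (LSmeasure p) ↔ Integrable (fun u => p u * h u) := by
  change Integrable h (volume.withDensity (fun u => ((p u).toNNReal : ℝ≥0∞))) ↔ _
  rw [integrable_withDensity_iff_integrable_smul hpm.real_toNNReal]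
  refine integrable_congr ?_
  filter_upwards [hp0] with u hu
  simp [NNReal.smul_def, Real.coe_toNNReal _ hu]

lemma integral_integral_mul_eq_integral_prod (hpm : Measurable p) (hp0 : 0 ≤ᵐ[volume] p)
    {F : ℝ × ℝ → ℝ} (hF : Integrable F ((LSmeasure p).prod (LSmeasure p))) :
    ∫ u, ∫ v, p u * p v * F (u, v) = ∫ w, F w ∂(LSmeasure p).prod (LSmeasure p) := by
  rw [integral_prod F hF, integral_LSmeasure hpm hp0]
  refine integral_congr_ae (Eventually.of_forall fun u => ?_)
  simp only [mul_assoc, integral_const_mul, integral_LSmeasure hpm hp0]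

end Density

namespace OrthonormalSystem

variable {p : ℝ → ℝ} {e : ℕ → ℝ → ℝ}

lemma memLp_two (hp : IsProbDensity p) (he : OrthonormalSystem p e) (k : ℕ) :
    MemLp (e k) 2 (LSmeasure p) := by
  have hint : Integrable fun u => e k u * e k u * p u := by
    by_contra h
    simpa [integral_undef h] using he.2.2 k k
  refine (memLp_two_iff_integrable_sq (he.2.1 k).aestronglyMeasurable).2 ?_
  rw [integrable_LSmeasure_iff hp.1 hp.2.1]
  exact hint.congr (Eventually.of_forall fun u => by ring)

lemma integrable_mul (hp : IsProbDensity p) (he : OrthonormalSystem p e) (k l : ℕ) :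
    Integrable (fun u => e k u * e l u) (LSmeasure p) :=
  (he.memLp_two hp k).integrable_mul (he.memLp_two hp l)

lemma integral_mul (hp : IsProbDensity p) (he : OrthonormalSystem p e) (k l : ℕ) :
    ∫ u, e k u * e l u ∂LSmeasure p = if k = l then 1 else 0 := by
  rw [integral_LSmeasure hp.1 hp.2.1, ← he.2.2 k l]
  exact integral_congr_ae (Eventually.of_forall fun u => by ring)

end OrthonormalSystem

lemma sq_sum_mul_eq {α : Type*} (f : ℕ → α → ℝ) (c : ℕ → ℝ) (s : Finset ℕ) (x y : α) :
    (∑ k ∈ s, c k * f k x * f k y) ^ 2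
      = ∑ k ∈ s, ∑ l ∈ s, c k * c l * ((f k x * f l x) * (f k y * f l y)) := by
  rw [sq, Finset.sum_mul_sum]
  exact Finset.sum_congr rfl fun k _ => Finset.sum_congr rfl fun l _ => by ring

section TensorSquare

variable {α : Type*} [MeasurableSpace α] {μ : Measure α} {f : ℕ → α → ℝ}

lemma integrable_sq_sum_mul (hint : ∀ k l, Integrable (fun x => f k x * f l x) μ)
    (c : ℕ → ℝ) (s : Finset ℕ) :
    Integrable (fun w : α × α => (∑ k ∈ s, c k * f k w.1 * f k w.2) ^ 2) (μ.prod μ) := by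
  simp_rw [sq_sum_mul_eq]
  exact integrable_finsetSum _ fun k _ => integrable_finsetSum _ fun l _ =>
    ((hint k l).mul_prod (hint k l)).const_mul _

lemma integral_sq_sum_mul [SFinite μ] (hint : ∀ k l, Integrable (fun x => f k x * f l x) μ)
    (horth : ∀ k l, ∫ x, f k x * f l x ∂μ = if k = l then 1 else 0) (c : ℕ → ℝ) (s : Finset ℕ) :
    ∫ w, (∑ k ∈ s, c k * f k w.1 * f k w.2) ^ 2 ∂(μ.prod μ) = ∑ k ∈ s, c k ^ 2 := by
  simp_rw [sq_sum_mul_eq]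
  rw [integral_finsetSum _ fun k _ => integrable_finsetSum _ fun l _ =>
    ((hint k l).mul_prod (hint k l)).const_mul _]
  refine Finset.sum_congr rfl fun k hk => ?_
  rw [integral_finsetSum _ fun l _ => ((hint k l).mul_prod (hint k l)).const_mul _]
  calc ∑ l ∈ s, ∫ w, c k * c l * ((f k w.1 * f l w.1) * (f k w.2 * f l w.2)) ∂(μ.prod μ)
      = ∑ l ∈ s, c k * c l * (if k = l then 1 else 0) := Finset.sum_congr rfl fun l _ => by
        rw [integral_const_mul, integral_prod_mul (fun x => f k x * f l x) (fun x => f k x * f l x),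
          horth]
        split_ifs <;> simp
    _ = c k ^ 2 := by simp [hk, sq]

end TensorSquare

lemma memLp_two_and_integral_sq_le_of_ae_tendsto {α : Type*} [MeasurableSpace α]
    {μ : Measure α} {f : ℕ → α → ℝ} {g : α → ℝ} {C : ℝ} (hf : ∀ n, AEMeasurable (f n) μ)
    (hfi : ∀ n, Integrable (fun x => f n x ^ 2) μ) (hC : ∀ n, ∫ x, f n x ^ 2 ∂μ ≤ C)
    (hlim : ∀ᵐ x ∂μ, Tendsto (fun n => f n x) atTop (𝓝 (g x))) :
    MemLp g 2 μ ∧ ∫ x, g x ^ 2 ∂μ ≤ C := by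
  have hg : AEMeasurable g μ := aemeasurable_of_tendsto_metrizable_ae' hf hlim
  have hg2 : AEStronglyMeasurable (fun x => g x ^ 2) μ := (hg.pow_const 2).aestronglyMeasurable
  have hlin : ∫⁻ x, ENNReal.ofReal (g x ^ 2) ∂μ ≤ ENNReal.ofReal C :=
    calc ∫⁻ x, ENNReal.ofReal (g x ^ 2) ∂μ
        = ∫⁻ x, liminf (fun n => ENNReal.ofReal (f n x ^ 2)) atTop ∂μ := by
          refine lintegral_congr_ae ?_
          filter_upwards [hlim] with x hx
          exact ((ENNReal.tendsto_ofReal (hx.pow 2)).liminf_eq).symm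
      _ ≤ liminf (fun n => ∫⁻ x, ENNReal.ofReal (f n x ^ 2) ∂μ) atTop :=
          lintegral_liminf_le' fun n => ((hf n).pow_const 2).ennreal_ofReal
      _ ≤ ENNReal.ofReal C := by
          refine liminf_le_of_frequently_le' (Frequently.of_forall fun n => ?_)
          rw [← ofReal_integral_eq_lintegral_ofReal (hfi n) (ae_of_all _ fun x => sq_nonneg _)]
          exact ENNReal.ofReal_le_ofReal (hC n)
  have hC0 : 0 ≤ C := (integral_nonneg fun x => sq_nonneg _).trans (hC 0)
  refine ⟨(memLp_two_iff_integrable_sq hg.aestronglyMeasurable).2 ⟨hg2, ?_⟩, ?_⟩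
  · rw [hasFiniteIntegral_iff_ofReal (ae_of_all _ fun x => sq_nonneg _)]
    exact hlin.trans_lt ENNReal.ofReal_lt_top
  · rw [integral_eq_lintegral_of_nonneg_ae (ae_of_all _ fun x => sq_nonneg _) hg2]
    exact ENNReal.toReal_le_of_le_ofReal hC0 hlin

lemma sq_integral_abs_le_integral_sq {α : Type*} [MeasurableSpace α] {μ : Measure α}
    [IsProbabilityMeasure μ] {f : α → ℝ} (hf : MemLp f 2 μ) :
    (∫ x, |f x| ∂μ) ^ 2 ≤ ∫ x, f x ^ 2 ∂μ := by
  have := ProbabilityTheory.variance_nonneg |f| μ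
  rw [ProbabilityTheory.variance_eq_sub hf.abs] at this
  simpa [Pi.pow_apply, sq_abs] using this

lemma sum_range_sq_pow_succ_le {t : ℝ} (ht : t ^ 2 < 1) (n : ℕ) :
    ∑ k ∈ Finset.range n, (t ^ (k + 1)) ^ 2 ≤ t ^ 2 / (1 - t ^ 2) := by
  calc ∑ k ∈ Finset.range n, (t ^ (k + 1)) ^ 2
      = t ^ 2 * ∑ k ∈ Finset.Ico 0 n, (t ^ 2) ^ k := by
        rw [Finset.range_eq_Ico, Finset.mul_sum]
        exact Finset.sum_congr rfl fun k _ => by ring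
    _ ≤ t ^ 2 * ((t ^ 2) ^ 0 / (1 - t ^ 2)) :=
        mul_le_mul_of_nonneg_left (geom_sum_Ico_le_of_lt_one (sq_nonneg t) ht) (sq_nonneg t)
    _ = t ^ 2 / (1 - t ^ 2) := by ring

lemma abs_one_add_mul_log_le {x : ℝ} (hx : 0 ≤ 1 + x) :
    |(1 + x) * Real.log (1 + x)| ≤ |x| + x ^ 2 := by
  rcases hx.eq_or_lt with hx | hx
  · simp [← hx]; positivity
  have hupper := Real.log_le_sub_one_of_pos hx
  have hlower := Real.one_sub_inv_le_log_of_pos hx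
  have hinv : (1 + x) * (1 + x)⁻¹ = 1 := mul_inv_cancel₀ hx.ne'
  rw [abs_le]
  constructor <;> nlinarith [neg_abs_le x, le_abs_self x, sq_nonneg x,
    mul_le_mul_of_nonneg_left hupper hx.le, mul_le_mul_of_nonneg_left hlower hx.le]

section Kernel

variable {p : ℝ → ℝ} {e : ℕ → ℝ → ℝ}

lemma LSdens_mul_log_eq (t u v : ℝ) :
    LSdens p e t u v * Real.log (LSdens p e t u v / (p u * p v))
      = p u * p v * ((1 + LSker e t u v) * Real.log (1 + LSker e t u v)) := by
  by_cases hc : p u * p v = 0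
  · simp [LSdens, hc]
  · rw [LSdens, mul_div_cancel_left₀ _ hc, mul_assoc]

lemma memLp_two_LSker_and_integral_sq_le (hp : IsProbDensity p) (he : OrthonormalSystem p e)
    {t : ℝ} (ht : t ^ 2 < 1)
    (hsum : ∀ᵐ w : ℝ × ℝ ∂((LSmeasure p).prod (LSmeasure p)),
      Summable fun k : ℕ => t ^ (k + 1) * e (k + 1) w.1 * e (k + 1) w.2) :
    MemLp (fun w : ℝ × ℝ => LSker e t w.1 w.2) 2 ((LSmeasure p).prod (LSmeasure p)) ∧
      ∫ w, LSker e t w.1 w.2 ^ 2 ∂((LSmeasure p).prod (LSmeasure p)) ≤ t ^ 2 / (1 - t ^ 2) := by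
  have hint (k l : ℕ) := he.integrable_mul hp (k + 1) (l + 1)
  have horth (k l : ℕ) : ∫ u, e (k + 1) u * e (l + 1) u ∂LSmeasure p = if k = l then 1 else 0 := by
    simpa using he.integral_mul hp (k + 1) (l + 1)
  refine memLp_two_and_integral_sq_le_of_ae_tendsto (fun n => ?_)
    (fun n => integrable_sq_sum_mul hint (fun k => t ^ (k + 1)) (Finset.range n))
    (fun n => ?_) ?_
  · exact (Finset.measurable_sum _ fun k _ => ((measurable_const.mul
      ((he.2.1 _).comp measurable_fst)).mul ((he.2.1 _).comp measurable_snd))).aemeasurable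
  · rw [integral_sq_sum_mul hint horth]
    exact sum_range_sq_pow_succ_le ht n
  · filter_upwards [hsum] with w hw
    exact hw.hasSum.tendsto_sum_nat

lemma abs_LSmutualInfo_le (hp : IsProbDensity p) (he : OrthonormalSystem p e) {t : ℝ}
    (ht : |t| ≤ 1 / 2)
    (hsum : ∀ᵐ w : ℝ × ℝ ∂((LSmeasure p).prod (LSmeasure p)),
      Summable fun k : ℕ => t ^ (k + 1) * e (k + 1) w.1 * e (k + 1) w.2)
    (hpos : ∀ᵐ w : ℝ × ℝ ∂((LSmeasure p).prod (LSmeasure p)), 0 ≤ 1 + LSker e t w.1 w.2) :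
    |LSmutualInfo p e t| ≤ 3 * |t| := by
  have := hp.isProbabilityMeasure
  set ν := (LSmeasure p).prod (LSmeasure p)
  set Q : ℝ × ℝ → ℝ := fun w => LSker e t w.1 w.2
  have ht2 : t ^ 2 ≤ 1 / 4 := by nlinarith [sq_abs t, abs_nonneg t]
  obtain ⟨hQ, hQ2⟩ := memLp_two_LSker_and_integral_sq_le hp he (by linarith) hsum
  have hQ2' : ∫ w, Q w ^ 2 ∂ν ≤ 2 * t ^ 2 := by
    refine hQ2.trans ?_
    rw [div_le_iff₀ (by linarith)]
    nlinarith [sq_nonneg t]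
  have hQ1 : ∫ w, |Q w| ∂ν ≤ 2 * |t| := by
    have hsq := sq_integral_abs_le_integral_sq hQ
    have hnonneg : 0 ≤ ∫ w, |Q w| ∂ν := integral_nonneg fun w => abs_nonneg (Q w)
    nlinarith [sq_abs t, abs_nonneg t]
  have hQi : Integrable Q ν := hQ.integrable one_le_two
  have hgi : Integrable (fun w => (1 + Q w) * Real.log (1 + Q w)) ν := by
    refine Integrable.mono' (hQi.abs.add hQ.integrable_sq) ?_ ?_
    · have hQm := hQ.aestronglyMeasurable.aemeasurable
      exact (by fun_prop : AEMeasurable (fun w => (1 + Q w) * Real.log (1 + Q w)) ν)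
        |>.aestronglyMeasurable
    · filter_upwards [hpos] with w hw
      exact abs_one_add_mul_log_le hw
  have hMI : LSmutualInfo p e t = ∫ w, (1 + Q w) * Real.log (1 + Q w) ∂ν := by
    simp only [LSmutualInfo, LSdens_mul_log_eq]
    exact integral_integral_mul_eq_integral_prod hp.1 hp.2.1 hgi
  calc |LSmutualInfo p e t| ≤ ∫ w, |(1 + Q w) * Real.log (1 + Q w)| ∂ν := by
        rw [hMI]; exact abs_integral_le_integral_abs
    _ ≤ ∫ w, (|Q w| + Q w ^ 2) ∂ν := by
        refine integral_mono_ae hgi.abs (hQi.abs.add hQ.integrable_sq) ?_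
        filter_upwards [hpos] with w hw
        exact abs_one_add_mul_log_le hw
    _ = ∫ w, |Q w| ∂ν + ∫ w, Q w ^ 2 ∂ν := integral_add hQi.abs hQ.integrable_sq
    _ ≤ 3 * |t| := by nlinarith [sq_abs t, abs_nonneg t]

end Kernel

theorem shannon_mutual_information_macroscale_decay_general
    (p : ℝ → ℝ) (e : ℕ → ℝ → ℝ) (γ : ℝ → ℝ) (ϱ : ℝ)
    (hp : IsProbDensity p) (he : OrthonormalSystem p e)
    (hγ0 : Tendsto γ atTop (nhds 0))
    (hγO : γ =O[atTop] fun r : ℝ => r ^ (-ϱ))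
    (hconv : ∀ r > (0 : ℝ), KerConvergesInL2 p e (γ r))
    (hnonneg : ∀ r > (0 : ℝ),
      ∀ᵐ w : ℝ × ℝ ∂((LSmeasure p).prod (LSmeasure p)),
        0 ≤ 1 + LSker e (γ r) w.1 w.2) :
    (fun r : ℝ =>
        ∫ u : ℝ, ∫ v : ℝ,
          LSdens p e (γ r) u v * Real.log (LSdens p e (γ r) u v / (p u * p v)))
      =O[atTop] fun r : ℝ => r ^ (-ϱ) := by
  have hsmall : ∀ᶠ r in atTop, |γ r| < 1 / 2 :=
    hγ0.abs.eventually_lt_const (by norm_num)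
  have hMI : (fun r => LSmutualInfo p e (γ r)) =O[atTop] γ := by
    refine IsBigO.of_bound 3 ?_
    filter_upwards [eventually_gt_atTop 0, hsmall] with r hr hγr
    exact abs_LSmutualInfo_le hp he hγr.le (hconv r hr).1 (hnonneg r hr)
  exact hMI.trans hγO

/-- **Lemma 1.** Under Assumption I, the Shannon mutual information between two
marginal components of a Lancaster–Sarmanov random field at spatial distance `r`
decays as `O(r^{-ϱ})` as `r → ∞`. -/
theorem shannon_mutual_information_macroscale_decay
    (p : ℝ → ℝ) (e : ℕ → ℝ → ℝ) (γ : ℝ → ℝ) (ϱ : ℝ) (hϱ : 0 < ϱ)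
    (hp : IsProbDensity p) (he : OrthonormalSystem p e)
    (hγrange : ∀ r > (0 : ℝ), γ r ∈ Set.Ico (0 : ℝ) 1)
    (hγ0 : Tendsto γ atTop (nhds 0))
    (hγO : γ =O[atTop] fun r : ℝ => r ^ (-ϱ))
    (hconv : ∀ r > (0 : ℝ), KerConvergesInL2 p e (γ r))
    (hnonneg : ∀ r > (0 : ℝ),
      ∀ᵐ w : ℝ × ℝ ∂((LSmeasure p).prod (LSmeasure p)),
        0 ≤ 1 + LSker e (γ r) w.1 w.2) :
    (fun r : ℝ =>
        ∫ u : ℝ, ∫ v : ℝ,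
          LSdens p e (γ r) u v * Real.log (LSdens p e (γ r) u v / (p u * p v)))
      =O[atTop] fun r : ℝ => r ^ (-ϱ) :=
  shannon_mutual_information_macroscale_decay_general p e γ ϱ hp he hγ0 hγO hconv hnonneg

end
end

section
/- Theorem 2 (macroscale decay of Rényi mutual information of integer order q): Let q ≥ 2 be an integer. For every multi-index (k₁,…,k_q) with all k_i ≥ 1, assume e_{k₁}⋯e_{k_q} ∈ L¹(μ) and set c(k₁,…,k_q) := ( ∫ e_{k₁}(u)⋯e_{k_q}(u) p(u) du )². Suppose S := sup_{k₁,…,k_q ≥ 1} c(k₁,…,k_q) < ∞. Then, under Assumption I, the Rényi mutual information of order q between two marginal components at distance r, given by R_q(r) := (1/(q−1)) · ln( 1 + Σ_{k₁,…,k_q ≥ 1} γ(r)^{k₁+⋯+k_q} c(k₁,…,k_q) ), satisfies R_q(r) = O(r^{-qϱ}) as r → ∞. -/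
/-!
For `t = γ r ∈ [0, 1)` the weights `t^(k₁+⋯+k_q+q)` factor into `q` geometric series, so with
the squared moments bounded by `S` the series inside the logarithm is at most
`S (t / (1 - t))^q ≤ S (2t)^q` once `t ≤ 1/2`. Since `log (1 + x) ≤ x`, this gives
`R_q(r) = O(γ(r)^q) = O(r^(-qϱ))`.
-/

open MeasureTheory Real Filter Asymptotics

noncomputable section

theorem hasSum_fin_prod_of_nonneg {β : Type*} {f : β → ℝ} {a : ℝ} (hf0 : 0 ≤ f)
    (hf : HasSum f a) (n : ℕ) : HasSum (fun k : Fin n → β => ∏ i, f (k i)) (a ^ n) := by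
  induction n with
  | zero => simp
  | succ n ih =>
    have hsum := hf.summable.mul_of_nonneg (g := fun k : Fin n → β => ∏ i, f (k i)) ih.summable
      hf0 fun k => Finset.prod_nonneg fun i _ => hf0 _
    have hcons : (fun k : Fin (n + 1) → β => ∏ i, f (k i)) ∘ Fin.consEquiv (fun _ => β) =
        fun z => f z.1 * ∏ i, f (z.2 i) := by
      ext z
      simp [Fin.prod_univ_succ]
    rw [← (Fin.consEquiv fun _ => β).hasSum_iff, hcons, pow_succ']
    exact HasSum.mul (f := f) (g := fun k : Fin n → β => ∏ i, f (k i)) hf ih hsum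

theorem hasSum_pow_sum_succ {t : ℝ} (h0 : 0 ≤ t) (h1 : t < 1) (n : ℕ) :
    HasSum (fun k : Fin n → ℕ => t ^ ∑ i, (k i + 1)) ((t / (1 - t)) ^ n) := by
  have hgeom : HasSum (fun m : ℕ => t ^ (m + 1)) (t / (1 - t)) := by
    simpa [pow_succ', div_eq_mul_inv] using (hasSum_geometric_of_lt_one h0 h1).mul_left t
  simpa [Finset.prod_pow_eq_pow_sum] using
    hasSum_fin_prod_of_nonneg (fun m => pow_nonneg h0 _) hgeom n

theorem tsum_pow_sum_succ_mul_le {t S : ℝ} {n : ℕ} {c : (Fin n → ℕ) → ℝ} (h0 : 0 ≤ t)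
    (h1 : t < 1) (hc0 : ∀ k, 0 ≤ c k) (hcS : ∀ k, c k ≤ S) :
    ∑' k, t ^ (∑ i, (k i + 1)) * c k ≤ (t / (1 - t)) ^ n * S := by
  have hgeom := hasSum_pow_sum_succ h0 h1 n
  have hle : ∀ k : Fin n → ℕ, t ^ (∑ i, (k i + 1)) * c k ≤ t ^ (∑ i, (k i + 1)) * S :=
    fun k => mul_le_mul_of_nonneg_left (hcS k) (pow_nonneg h0 _)
  refine (Summable.tsum_le_tsum hle ?_ (hgeom.summable.mul_right S)).trans_eq ?_
  · exact (hgeom.summable.mul_right S).of_nonneg_of_le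
      (fun k => mul_nonneg (pow_nonneg h0 _) (hc0 k)) hle
  · rw [tsum_mul_right, hgeom.tsum_eq]

theorem isBigO_tsum_pow_sum_succ_mul {α : Type*} {l : Filter α} {γ : α → ℝ} {S : ℝ} {n : ℕ}
    {c : (Fin n → ℕ) → ℝ} (hγ : Tendsto γ l (nhds 0)) (hγ0 : ∀ᶠ x in l, 0 ≤ γ x)
    (hc0 : ∀ k, 0 ≤ c k) (hcS : ∀ k, c k ≤ S) :
    (fun x => ∑' k, γ x ^ (∑ i, (k i + 1)) * c k) =O[l] fun x => γ x ^ n := by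
  refine IsBigO.of_bound (2 ^ n * S) ?_
  filter_upwards [hγ0, hγ.eventually_lt_const one_half_pos] with x hx0 hx
  have hS : 0 ≤ S := (hc0 fun _ => 0).trans (hcS _)
  have hdiv : γ x / (1 - γ x) ≤ 2 * γ x := by
    rw [div_le_iff₀ (by linarith)]
    nlinarith
  rw [Real.norm_of_nonneg (tsum_nonneg fun k => mul_nonneg (pow_nonneg hx0 _) (hc0 k)),
    Real.norm_of_nonneg (pow_nonneg hx0 _)]
  calc ∑' k, γ x ^ (∑ i, (k i + 1)) * c k
      ≤ (γ x / (1 - γ x)) ^ n * S := tsum_pow_sum_succ_mul_le hx0 (by linarith) hc0 hcS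
    _ ≤ (2 * γ x) ^ n * S := by gcongr; exact div_nonneg hx0 (by linarith)
    _ = 2 ^ n * S * γ x ^ n := by ring

theorem isBigO_log_one_add {α : Type*} {l : Filter α} {u : α → ℝ} (hu : ∀ᶠ x in l, 0 ≤ u x) :
    (fun x => log (1 + u x)) =O[l] u := by
  refine IsBigO.of_bound 1 ?_
  filter_upwards [hu] with x hx
  rw [one_mul, Real.norm_of_nonneg (log_nonneg (by linarith)), Real.norm_of_nonneg hx]
  linarith [log_le_sub_one_of_pos (by linarith : 0 < 1 + u x)]

theorem rpow_neg_pow_eventuallyEq {ϱ : ℝ} (n : ℕ) :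
    (fun r : ℝ => (r ^ (-ϱ)) ^ n) =ᶠ[atTop] fun r => r ^ (-((n : ℝ) * ϱ)) := by
  filter_upwards [eventually_ge_atTop 0] with r hr
  rw [← rpow_natCast, ← rpow_mul hr]
  ring_nf

theorem renyi_mutual_information_macroscale_decay_general
    (p : ℝ → ℝ) (e : ℕ → ℝ → ℝ) (γ : ℝ → ℝ) (ϱ : ℝ)
    (hγrange : ∀ r > (0 : ℝ), γ r ∈ Set.Ico (0 : ℝ) 1)
    (hγ0 : Tendsto γ atTop (nhds 0))
    (hγO : γ =O[atTop] fun r : ℝ => r ^ (-ϱ))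
    (q : ℕ)
    (S : ℝ)
    (hS : ∀ k : Fin q → ℕ,
      (∫ u : ℝ, (∏ i : Fin q, e (k i + 1) u) * p u) ^ 2 ≤ S) :
    (fun r : ℝ =>
        (1 / ((q : ℝ) - 1)) *
          Real.log
            (1 + ∑' k : Fin q → ℕ,
              γ r ^ (∑ i : Fin q, (k i + 1)) *
                (∫ u : ℝ, (∏ i : Fin q, e (k i + 1) u) * p u) ^ 2))
      =O[atTop] fun r : ℝ => r ^ (-((q : ℝ) * ϱ)) := by
  have hγ_nonneg : ∀ᶠ r in atTop, 0 ≤ γ r :=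
    (eventually_gt_atTop 0).mono fun r hr => (hγrange r hr).1
  have hc0 : ∀ k : Fin q → ℕ, 0 ≤ (∫ u : ℝ, (∏ i : Fin q, e (k i + 1) u) * p u) ^ 2 :=
    fun _ => sq_nonneg _
  have hT := isBigO_tsum_pow_sum_succ_mul hγ0 hγ_nonneg hc0 hS
  have hγq : (fun r => γ r ^ q) =O[atTop] fun r : ℝ => r ^ (-((q : ℝ) * ϱ)) :=
    (hγO.pow q).trans_eventuallyEq (rpow_neg_pow_eventuallyEq q)
  refine ((isBigO_log_one_add ?_).trans (hT.trans hγq)).const_mul_left _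
  exact hγ_nonneg.mono fun r hr => tsum_nonneg fun k => mul_nonneg (pow_nonneg hr _) (hc0 k)

/-- **Theorem 2.** Macroscale decay of the Rényi mutual information of integer
order `q ≥ 2`: under Assumption I and uniform boundedness of the squared mixed
moments `c(k₁,…,k_q)`, `R_q(r) = O(r^{-qϱ})` as `r → ∞`. -/
theorem renyi_mutual_information_macroscale_decay
    (p : ℝ → ℝ) (e : ℕ → ℝ → ℝ) (γ : ℝ → ℝ) (ϱ : ℝ) (hϱ : 0 < ϱ)
    (hp : IsProbDensity p) (he : OrthonormalSystem p e)
    (hγrange : ∀ r > (0 : ℝ), γ r ∈ Set.Ico (0 : ℝ) 1)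
    (hγ0 : Tendsto γ atTop (nhds 0))
    (hγO : γ =O[atTop] fun r : ℝ => r ^ (-ϱ))
    (q : ℕ) (hq : 2 ≤ q)
    (hint : ∀ k : Fin q → ℕ,
      Integrable (fun u : ℝ => (∏ i : Fin q, e (k i + 1) u) * p u))
    (S : ℝ)
    (hS : ∀ k : Fin q → ℕ,
      (∫ u : ℝ, (∏ i : Fin q, e (k i + 1) u) * p u) ^ 2 ≤ S) :
    (fun r : ℝ =>
        (1 / ((q : ℝ) - 1)) *
          Real.log
            (1 + ∑' k : Fin q → ℕ,
              γ r ^ (∑ i : Fin q, (k i + 1)) *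
                (∫ u : ℝ, (∏ i : Fin q, e (k i + 1) u) * p u) ^ 2))
      =O[atTop] fun r : ℝ => r ^ (-((q : ℝ) * ϱ)) :=
  renyi_mutual_information_macroscale_decay_general p e γ ϱ hγrange hγ0 hγO q S hS

end
end

section
/- Multinomial expansion of the q-th moment of the Lancaster–Sarmanov kernel: let q ≥ 2 be an integer and t ∈ [0,1). Assume that for every multi-index (k₁,…,k_q) with all k_i ≥ 1 the product e_{k₁}⋯e_{k_q} belongs to L¹(μ), and that Σ_{k₁,…,k_q ≥ 1} t^{k₁+⋯+k_q} ( ∫ |e_{k₁}(u)⋯e_{k_q}(u)| p(u) du )² < ∞. Then Q_t(u,v)^q is integrable with respect to p(u)p(v) du dv and ∫∫ Q_t(u,v)^q p(u) p(v) du dv = Σ_{k₁,…,k_q ≥ 1} t^{k₁+⋯+k_q} ( ∫ e_{k₁}(u)⋯e_{k_q}(u) p(u) du )². -/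
/-!
Where the kernel series converges absolutely, `Q_t(u,v)^q` expands into the multiple series
`∑_k t^{k₁+⋯+k_q} e_k(u) e_k(v)` with `e_k = e_{k₁} ⋯ e_{k_q}`, whose terms factor in `u` and `v`.
By Fubini each term integrates to `t^{k₁+⋯+k_q} (∫ e_k p)²`, and the summability of the
absolute moments `t^{k₁+⋯+k_q} (∫ |e_k| p)²` is exactly the `L¹` bound that allows the sum
to be integrated term by term.
-/

open MeasureTheory Real Filter Asymptotics

noncomputable section

section FinProd

variable {ι R : Type*} [NormedCommRing R] {f : ι → R}

theorem prod_fin_consEquiv {q : ℕ} (z : ι × (Fin q → ι)) :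
    ∏ i, f (Fin.consEquiv (fun _ => ι) z i) = f z.1 * ∏ i, f (z.2 i) := by
  simp [Fin.consEquiv, Fin.prod_univ_succ]

theorem summable_norm_prod_fin (hf : Summable fun k => ‖f k‖) :
    ∀ q : ℕ, Summable fun k : Fin q → ι => ‖∏ i, f (k i)‖
  | 0 => .of_finite
  | q + 1 => by
    rw [← (Fin.consEquiv fun _ => ι).summable_iff]
    simpa only [Function.comp_def, prod_fin_consEquiv] using
      hf.mul_norm (summable_norm_prod_fin hf q)

theorem tsum_pow_eq_tsum_prod_fin [CompleteSpace R] (hf : Summable fun k => ‖f k‖) :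
    ∀ q : ℕ, (∑' k, f k) ^ q = ∑' k : Fin q → ι, ∏ i, f (k i)
  | 0 => by simp
  | q + 1 => by
    rw [pow_succ', tsum_pow_eq_tsum_prod_fin hf q,
      tsum_mul_tsum_of_summable_norm hf (summable_norm_prod_fin hf q),
      ← (Fin.consEquiv fun _ => ι).tsum_eq]
    simp only [prod_fin_consEquiv]

end FinProd

section Integral

variable {α : Type*} [MeasurableSpace α] {μ : Measure α}

theorem integrable_tsum_of_summable_integral_norm {ι E : Type*} [Countable ι]
    [NormedAddCommGroup E] [CompleteSpace E] {F : ι → α → E}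
    (hF_int : ∀ i, Integrable (F i) μ) (hF_sum : Summable fun i ↦ ∫ a, ‖F i a‖ ∂μ) :
    Integrable (fun a ↦ ∑' i, F i a) μ := by
  have hlint : ∑' i, ∫⁻ a, ‖F i a‖ₑ ∂μ ≠ ⊤ := by
    simp_rw [← ofReal_integral_norm_eq_lintegral_enorm (hF_int _)]
    rw [← ENNReal.ofReal_tsum_of_nonneg (fun i ↦ integral_nonneg fun a ↦ norm_nonneg _) hF_sum]
    exact ENNReal.ofReal_ne_top
  have hsummable : ∀ᵐ a ∂μ, Summable fun i ↦ ‖F i a‖ :=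
    summable_norm_of_tsum_eLpNorm_ne_top le_rfl (fun i ↦ (hF_int i).1)
      (by simpa only [eLpNorm_one_eq_lintegral_enorm] using hlint)
  refine ⟨aestronglyMeasurable_of_tendsto_ae atTop
    (fun s ↦ Finset.aestronglyMeasurable_sum s fun i _ ↦ (hF_int i).1) ?_, ?_⟩
  · filter_upwards [hsummable] with a ha
    simp only [Finset.sum_apply]
    exact ha.of_norm.hasSum
  · calc ∫⁻ a, ‖∑' i, F i a‖ₑ ∂μ ≤ ∫⁻ a, ∑' i, ‖F i a‖ₑ ∂μ :=
          lintegral_mono fun a ↦ enorm_tsum_le_tsum_enorm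
      _ = ∑' i, ∫⁻ a, ‖F i a‖ₑ ∂μ := lintegral_tsum fun i ↦ (hF_int i).1.enorm
      _ < ⊤ := hlint.lt_top

theorem integral_const_mul_prod_mul_self [SFinite μ] (c : ℝ) (g : α → ℝ) :
    ∫ w, c * (g w.1 * g w.2) ∂μ.prod μ = c * (∫ x, g x ∂μ) ^ 2 := by
  rw [integral_const_mul, integral_prod_mul, sq]

variable {p : α → ℝ}

theorem integral_withDensity_ofReal (hp : Measurable p) (hp0 : 0 ≤ᵐ[μ] p) (f : α → ℝ) :
    ∫ x, f x ∂μ.withDensity (fun x => ENNReal.ofReal (p x)) = ∫ x, f x * p x ∂μ := by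
  rw [integral_withDensity_eq_integral_toReal_smul hp.ennreal_ofReal
    (ae_of_all _ fun _ => ENNReal.ofReal_lt_top)]
  refine integral_congr_ae ?_
  filter_upwards [hp0] with x hx
  rw [ENNReal.toReal_ofReal hx, smul_eq_mul, mul_comm]

theorem integrable_withDensity_ofReal_iff (hp : Measurable p) (hp0 : 0 ≤ᵐ[μ] p) {f : α → ℝ} :
    Integrable f (μ.withDensity fun x => ENNReal.ofReal (p x)) ↔
      Integrable (fun x => f x * p x) μ := by
  rw [integrable_withDensity_iff hp.ennreal_ofReal (ae_of_all _ fun _ => ENNReal.ofReal_lt_top)]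
  refine integrable_congr ?_
  filter_upwards [hp0] with x hx
  rw [ENNReal.toReal_ofReal hx]

end Integral

instance inst_s8 (p : ℝ → ℝ) : SFinite (LSmeasure p) :=
  inferInstanceAs (SFinite (volume.withDensity _))

/-- `e_{k₁+1} ⋯ e_{k_q+1}`: as in `LSker`, indices are shifted so that `e₀ ≡ 1` never occurs. -/
def eigenProd (e : ℕ → ℝ → ℝ) {q : ℕ} (k : Fin q → ℕ) (u : ℝ) : ℝ :=
  ∏ i, e (k i + 1) u

def LSterm (e : ℕ → ℝ → ℝ) (t : ℝ) {q : ℕ} (k : Fin q → ℕ) (w : ℝ × ℝ) : ℝ :=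
  t ^ (∑ i, (k i + 1)) * (eigenProd e k w.1 * eigenProd e k w.2)

theorem LSker_pow_eq_tsum_LSterm {e : ℕ → ℝ → ℝ} {t u v : ℝ}
    (h : Summable fun k : ℕ => t ^ (k + 1) * e (k + 1) u * e (k + 1) v) (q : ℕ) :
    LSker e t u v ^ q = ∑' k : Fin q → ℕ, LSterm e t k (u, v) := by
  rw [LSker, tsum_pow_eq_tsum_prod_fin h.norm q]
  refine tsum_congr fun k => ?_
  simp only [LSterm, eigenProd, Finset.prod_mul_distrib, Finset.prod_pow_eq_pow_sum, mul_assoc]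

section LSterm

variable {μ : Measure ℝ} (e : ℕ → ℝ → ℝ) (t : ℝ) {q : ℕ} (k : Fin q → ℕ)

theorem integrable_LSterm (hk : Integrable (eigenProd e k) μ) :
    Integrable (LSterm e t k) (μ.prod μ) :=
  (hk.mul_prod hk).const_mul _

theorem integral_LSterm [SFinite μ] :
    ∫ w, LSterm e t k w ∂μ.prod μ = t ^ (∑ i, (k i + 1)) * (∫ u, eigenProd e k u ∂μ) ^ 2 :=
  integral_const_mul_prod_mul_self _ _

theorem integral_norm_LSterm [SFinite μ] :
    ∫ w, ‖LSterm e t k w‖ ∂μ.prod μ =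
      |t ^ (∑ i, (k i + 1)) * (∫ u, |eigenProd e k u| ∂μ) ^ 2| := by
  rw [abs_mul, abs_sq, ← integral_const_mul_prod_mul_self]
  simp only [LSterm, Real.norm_eq_abs, abs_mul]

end LSterm

theorem LSker_pow_moment_expansion_general
    (p : ℝ → ℝ) (e : ℕ → ℝ → ℝ)
    (hp : IsProbDensity p)
    (t : ℝ)
    (hconv : KerConvergesInL2 p e t)
    (q : ℕ)
    (hint : ∀ k : Fin q → ℕ,
      Integrable (fun u : ℝ => (∏ i : Fin q, e (k i + 1) u) * p u))
    (hsum : Summable fun k : Fin q → ℕ =>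
      t ^ (∑ i : Fin q, (k i + 1)) *
        (∫ u : ℝ, |∏ i : Fin q, e (k i + 1) u| * p u) ^ 2) :
    Integrable (fun w : ℝ × ℝ => (LSker e t w.1 w.2) ^ q)
        ((LSmeasure p).prod (LSmeasure p)) ∧
      (∫ w : ℝ × ℝ, (LSker e t w.1 w.2) ^ q
          ∂((LSmeasure p).prod (LSmeasure p)))
        = ∑' k : Fin q → ℕ,
            t ^ (∑ i : Fin q, (k i + 1)) *
              (∫ u : ℝ, (∏ i : Fin q, e (k i + 1) u) * p u) ^ 2 := by
  obtain ⟨hpm, hp0, -⟩ := hp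
  have hμ (f : ℝ → ℝ) : ∫ u, f u ∂LSmeasure p = ∫ u, f u * p u :=
    integral_withDensity_ofReal hpm hp0 f
  have hterm_int (k : Fin q → ℕ) : Integrable (LSterm e t k) ((LSmeasure p).prod (LSmeasure p)) :=
    integrable_LSterm e t k ((integrable_withDensity_ofReal_iff hpm hp0).2 (hint k))
  have hterm_sum : Summable fun k : Fin q → ℕ =>
      ∫ w, ‖LSterm e t k w‖ ∂(LSmeasure p).prod (LSmeasure p) := by
    simpa only [integral_norm_LSterm, hμ, eigenProd] using hsum.abs
  have hexpand : (fun w : ℝ × ℝ => LSker e t w.1 w.2 ^ q)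
      =ᵐ[(LSmeasure p).prod (LSmeasure p)] fun w => ∑' k : Fin q → ℕ, LSterm e t k w :=
    hconv.1.mono fun w hw => LSker_pow_eq_tsum_LSterm hw q
  refine ⟨(integrable_tsum_of_summable_integral_norm hterm_int hterm_sum).congr hexpand.symm, ?_⟩
  rw [integral_congr_ae hexpand, ← integral_tsum_of_summable_integral_norm hterm_int hterm_sum]
  simp only [integral_LSterm, hμ, eigenProd]

/-- **Multinomial expansion of the `q`-th moment of the Lancaster–Sarmanov
kernel:** for integer `q ≥ 2` and `t ∈ [0,1)`, under the stated integrability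
and summability assumptions, `Q_t^q` is integrable with respect to
`p(u) p(v) du dv` and
`∫∫ Q_t(u,v)^q p(u) p(v) du dv
  = ∑_{k₁,…,k_q ≥ 1} t^{k₁+⋯+k_q} (∫ e_{k₁} ⋯ e_{k_q} p)²`. -/
theorem LSker_pow_moment_expansion
    (p : ℝ → ℝ) (e : ℕ → ℝ → ℝ)
    (hp : IsProbDensity p) (he : OrthonormalSystem p e)
    (t : ℝ) (ht : t ∈ Set.Ico (0 : ℝ) 1)
    (hconv : KerConvergesInL2 p e t)
    (q : ℕ) (hq : 2 ≤ q)
    (hint : ∀ k : Fin q → ℕ,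
      Integrable (fun u : ℝ => (∏ i : Fin q, e (k i + 1) u) * p u))
    (hsum : Summable fun k : Fin q → ℕ =>
      t ^ (∑ i : Fin q, (k i + 1)) *
        (∫ u : ℝ, |∏ i : Fin q, e (k i + 1) u| * p u) ^ 2) :
    Integrable (fun w : ℝ × ℝ => (LSker e t w.1 w.2) ^ q)
        ((LSmeasure p).prod (LSmeasure p)) ∧
      (∫ w : ℝ × ℝ, (LSker e t w.1 w.2) ^ q
          ∂((LSmeasure p).prod (LSmeasure p)))
        = ∑' k : Fin q → ℕ,
            t ^ (∑ i : Fin q, (k i + 1)) *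
              (∫ u : ℝ, (∏ i : Fin q, e (k i + 1) u) * p u) ^ 2 :=
  LSker_pow_moment_expansion_general p e hp t hconv q hint hsum

end
end
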